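/- arXiv:1501.06342 — 3 statements merged into one kernel-verified Lean document; each statement's English description precedes it below -/
import Mathlib

section
/- Let P be the transition matrix of an absorbing finite Markov chain with transient part Q (so the expected absorption time vector is τ = Σ_{n≥0} Qⁿ·1), and let Q̂ be the transient part of the loop-erased chain with τ̂ = Σ_{n≥0} Q̂ⁿ·1. Then for every transient state S, τ̂_S ≤ τ_S. -/
/-!
Since `Qⁿ → 0`, the matrix `1 - Q` is invertible and the Neumann series `∑ Qⁿ` converges, so
`τ` is finite and satisfies `τ = 1 + Qτ`. Writing `q = Q s s`, solving the `s`-th equation for its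
off-diagonal part gives `1 + (Q̂τ) s = τ s - q / (1 - q) ≤ τ s`. Thus `τ ≥ 1 + Q̂τ`, and iterating
this inequality bounds every partial sum of `∑ Q̂ⁿ·1` by `τ`.
-/

open Filter Finset Topology

section NeumannSeries

variable {R : Type*} [Ring R] [TopologicalSpace R] [IsTopologicalRing R]

theorem tendsto_geom_sum_of_tendsto_pow_zero {x : R}
    (hx : Tendsto (fun n : ℕ => x ^ n) atTop (𝓝 0)) (hu : IsUnit (1 - x)) :
    Tendsto (fun n => ∑ i ∈ range n, x ^ i) atTop (𝓝 ↑hu.unit⁻¹) := by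
  have hsum : ∀ n, ∑ i ∈ range n, x ^ i = ↑hu.unit⁻¹ * (1 - x ^ n) := fun n => by
    rw [← mul_neg_geom_sum, ← mul_assoc, hu.val_inv_mul, one_mul]
  simp only [hsum]
  simpa using ((tendsto_const_nhds (x := (1 : R))).sub hx).const_mul (↑hu.unit⁻¹ : R)

end NeumannSeries

namespace Matrix

section Order

variable {T R : Type*} [Fintype T] [Semiring R] [PartialOrder R] [IsOrderedRing R]
  {P : Matrix T T R}

theorem mulVec_nonneg_of_nonneg (hP : ∀ s s', 0 ≤ P s s') {v : T → R} (hv : 0 ≤ v) :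
    0 ≤ P *ᵥ v := fun s =>
  dotProduct_nonneg_of_nonneg (hP s) hv

theorem mulVec_mono_of_nonneg (hP : ∀ s s', 0 ≤ P s s') {v w : T → R} (hvw : v ≤ w) :
    P *ᵥ v ≤ P *ᵥ w := fun s =>
  dotProduct_le_dotProduct_of_nonneg_left hvw (hP s)

theorem pow_mulVec_nonneg_of_nonneg [DecidableEq T] (hP : ∀ s s', 0 ≤ P s s')
    {v : T → R} (hv : 0 ≤ v) (n : ℕ) : 0 ≤ P ^ n *ᵥ v := by
  induction n with
  | zero => simpa using hv
  | succ n ih => rw [pow_succ', ← mulVec_mulVec]; exact mulVec_nonneg_of_nonneg hP ih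

end Order

variable {T : Type*} [DecidableEq T]

/-- The loop-erased chain moves like the original one conditioned on leaving its current state. -/
noncomputable def loopErase (Q : Matrix T T ℝ) : Matrix T T ℝ :=
  of fun s s' => if s' = s then 0 else Q s s' / (1 - Q s s)

theorem loopErase_apply (Q : Matrix T T ℝ) (s s' : T) :
    loopErase Q s s' = if s' = s then 0 else Q s s' / (1 - Q s s) :=
  rfl

theorem loopErase_apply_nonneg {Q : Matrix T T ℝ} (hQ : ∀ s s', 0 ≤ Q s s')
    (hdiag : ∀ s, Q s s < 1) (s s' : T) : 0 ≤ loopErase Q s s' := by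
  rw [loopErase_apply]
  split_ifs
  · exact le_rfl
  · exact div_nonneg (hQ s s') (sub_nonneg.mpr (hdiag s).le)

variable [Fintype T]

theorem isUnit_one_sub_of_tendsto_pow_zero {K : Type*} [Field K] [TopologicalSpace K]
    [IsTopologicalRing K] [T2Space K] {Q : Matrix T T K}
    (hQ : Tendsto (fun n : ℕ => Q ^ n) atTop (𝓝 0)) : IsUnit (1 - Q) := by
  rw [← mulVec_injective_iff_isUnit]
  intro v w hvw
  have hfix : ∀ n : ℕ, Q ^ n *ᵥ (v - w) = v - w := by
    have hQ : Q *ᵥ (v - w) = v - w := by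
      rw [sub_mulVec, one_mulVec, sub_mulVec, one_mulVec] at hvw
      rw [mulVec_sub]; exact (sub_eq_sub_iff_sub_eq_sub.mp hvw).symm
    intro n
    induction n with
    | zero => simp
    | succ n ih => rw [pow_succ, ← mulVec_mulVec, hQ, ih]
  have hlim : Tendsto (fun n : ℕ => Q ^ n *ᵥ (v - w)) atTop (𝓝 (0 *ᵥ (v - w))) :=
    ((continuous_id.matrix_mulVec continuous_const).tendsto _).comp hQ
  simp only [hfix, zero_mulVec] at hlim
  exact sub_eq_zero.mp (tendsto_const_nhds_iff.mp hlim)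

theorem summable_pow_mulVec_apply {Q : Matrix T T ℝ} (hQ : ∀ s s', 0 ≤ Q s s')
    (hQn : Tendsto (fun n : ℕ => Q ^ n) atTop (𝓝 0)) {v : T → ℝ} (hv : 0 ≤ v) (s : T) :
    Summable fun n => (Q ^ n *ᵥ v) s := by
  have hu := isUnit_one_sub_of_tendsto_pow_zero hQn
  have hcont : Continuous fun A : Matrix T T ℝ => (A *ᵥ v) s :=
    (continuous_apply s).comp (continuous_id.matrix_mulVec continuous_const)
  have hlim := (hcont.tendsto _).comp (tendsto_geom_sum_of_tendsto_pow_zero hQn hu)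
  refine ((hasSum_iff_tendsto_nat_of_nonneg (fun n => pow_mulVec_nonneg_of_nonneg hQ hv n s)
    (((↑hu.unit⁻¹ : Matrix T T ℝ) *ᵥ v) s)).mpr ?_).summable
  simpa [Function.comp_def, sum_mulVec, Finset.sum_apply] using hlim

theorem tsum_pow_mulVec_eq_add_mulVec {R : Type*} [Ring R] [TopologicalSpace R]
    [IsTopologicalRing R] [T2Space R] {Q : Matrix T T R} {v : T → R}
    (hs : ∀ s, Summable fun n => (Q ^ n *ᵥ v) s) :
    (fun s => ∑' n, (Q ^ n *ᵥ v) s) = v + Q *ᵥ fun s => ∑' n, (Q ^ n *ᵥ v) s := by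
  ext s
  have hstep : ∀ n, (Q ^ (n + 1) *ᵥ v) s = ∑ s', Q s s' * (Q ^ n *ᵥ v) s' := fun n => by
    rw [pow_succ', ← mulVec_mulVec]; rfl
  rw [(hs s).tsum_eq_zero_add, pow_zero, one_mulVec]
  simp only [hstep]
  rw [Summable.tsum_finsetSum fun s' _ => (hs s').mul_left _]
  simp only [fun s' => (hs s').tsum_mul_left (Q s s')]
  rfl

theorem tsum_pow_mulVec_apply_le_of_add_mulVec_le {P : Matrix T T ℝ} (hP : ∀ s s', 0 ≤ P s s') {u τ : T → ℝ}
    (hu : 0 ≤ u) (hτ : 0 ≤ τ) (hsuper : u + P *ᵥ τ ≤ τ) (s : T) :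
    ∑' n, (P ^ n *ᵥ u) s ≤ τ s := by
  have hpartial : ∀ K, ∑ n ∈ range K, P ^ n *ᵥ u ≤ τ := by
    intro K
    induction K with
    | zero => simpa using hτ
    | succ K ih =>
      calc ∑ n ∈ range (K + 1), P ^ n *ᵥ u = u + P *ᵥ ∑ n ∈ range K, P ^ n *ᵥ u := by
            rw [sum_range_succ', pow_zero, one_mulVec, add_comm, mulVec_sum]
            simp only [pow_succ', mulVec_mulVec]
        _ ≤ u + P *ᵥ τ := add_le_add le_rfl (mulVec_mono_of_nonneg hP ih)
        _ ≤ τ := hsuper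
  refine Real.tsum_le_of_sum_range_le (fun n => pow_mulVec_nonneg_of_nonneg hP hu n s) fun K => ?_
  simpa [Finset.sum_apply] using hpartial K s

theorem loopErase_mulVec_apply (Q : Matrix T T ℝ) (τ : T → ℝ) (s : T) :
    (loopErase Q *ᵥ τ) s = ((Q *ᵥ τ) s - Q s s * τ s) / (1 - Q s s) := by
  have hdiag : loopErase Q s s * τ s = 0 := by simp [loopErase_apply]
  rw [mulVec, dotProduct, ← sum_erase (f := fun s' => loopErase Q s s' * τ s') univ hdiag,
    mulVec, dotProduct,
    ← sum_erase_eq_sub (mem_univ s), sum_div]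
  refine sum_congr rfl fun s' hs' => ?_
  simp [loopErase_apply, ne_of_mem_erase hs', div_mul_eq_mul_div]

theorem one_add_loopErase_mulVec_apply_le {Q : Matrix T T ℝ} {τ : T → ℝ} {s : T} (hQ0 : 0 ≤ Q s s)
    (hQ1 : Q s s < 1) (hτ : τ s = 1 + (Q *ᵥ τ) s) :
    1 + (loopErase Q *ᵥ τ) s ≤ τ s := by
  have hpos : 0 < 1 - Q s s := sub_pos.mpr hQ1
  have hgap : τ s - (1 + (loopErase Q *ᵥ τ) s) = Q s s / (1 - Q s s) := by
    rw [loopErase_mulVec_apply, hτ]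
    field_simp
    ring
  linarith [div_nonneg hQ0 hpos.le]

end Matrix

theorem loop_erasing_absorption_time_le_general
    {T : Type*} [Fintype T] [DecidableEq T]
    (Q Qhat : Matrix T T ℝ) (τ τhat : T → ℝ)
    (hnonneg : ∀ s s', 0 ≤ Q s s')
    (hdiag : ∀ s, Q s s < 1)
    (hQn : Tendsto (fun n : ℕ => Q ^ n) atTop (nhds 0))
    (hQhat : ∀ s s', Qhat s s' = if s' = s then 0 else Q s s' / (1 - Q s s))
    (hτ : ∀ s, τ s = ∑' n : ℕ, ((Q ^ n).mulVec (fun _ => (1 : ℝ))) s)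
    (hτhat : ∀ s, τhat s = ∑' n : ℕ, ((Qhat ^ n).mulVec (fun _ => (1 : ℝ))) s) :
    ∀ s, τhat s ≤ τ s := by
  obtain rfl : Qhat = Q.loopErase := Matrix.ext hQhat
  obtain rfl : τ = fun s => ∑' n, ((Q ^ n).mulVec 1) s := funext hτ
  have hτ_nonneg : 0 ≤ fun s => ∑' n, ((Q ^ n).mulVec 1) s := fun s =>
    tsum_nonneg fun n => Matrix.pow_mulVec_nonneg_of_nonneg hnonneg zero_le_one n s
  have hτ_fix := Matrix.tsum_pow_mulVec_eq_add_mulVec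
    (Matrix.summable_pow_mulVec_apply hnonneg hQn zero_le_one)
  intro s
  rw [hτhat s]
  exact Matrix.tsum_pow_mulVec_apply_le_of_add_mulVec_le (Matrix.loopErase_apply_nonneg hnonneg hdiag)
    zero_le_one hτ_nonneg
    (fun s => Matrix.one_add_loopErase_mulVec_apply_le (hnonneg s s) (hdiag s) (congrFun hτ_fix s)) s

/-- The expected absorption time of the loop-erased chain is bounded by that of
the original chain: if `Q` is the transient block of an absorbing Markov chain
(`Qⁿ → 0`), `Q̂` the transient block of the loop-erased chain, and
`τ = ∑_{n≥0} Qⁿ·1`, `τ̂ = ∑_{n≥0} Q̂ⁿ·1` the expected absorption times, then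
`τ̂_S ≤ τ_S` for every transient state `S`. -/
theorem loop_erasing_absorption_time_le
    {T : Type*} [Fintype T] [DecidableEq T]
    (Q Qhat : Matrix T T ℝ) (τ τhat : T → ℝ)
    (hnonneg : ∀ s s', 0 ≤ Q s s')
    (hrow : ∀ s, ∑ s', Q s s' ≤ 1)
    (hdiag : ∀ s, Q s s < 1)
    (hQn : Tendsto (fun n : ℕ => Q ^ n) atTop (nhds 0))
    (hQhat : ∀ s s', Qhat s s' = if s' = s then 0 else Q s s' / (1 - Q s s))
    (hτ : ∀ s, τ s = ∑' n : ℕ, ((Q ^ n).mulVec (fun _ => (1 : ℝ))) s)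
    (hτhat : ∀ s, τhat s = ∑' n : ℕ, ((Qhat ^ n).mulVec (fun _ => (1 : ℝ))) s) :
    ∀ s, τhat s ≤ τ s :=
  loop_erasing_absorption_time_le_general Q Qhat τ τhat hnonneg hdiag hQn hQhat hτ hτhat
end

section
/- For the star graph Moran process, the fixation probabilities satisfy the two-term recurrences Φ_{i+1,1} − Φ_{i,1} = (m/r)(Φ_{i,1} − Φ_{i,0}) and Φ_{i,1} − Φ_{i,0} = (1/(rm))(Φ_{i,0} − Φ_{i−1,0}). -/
/-!
Each equation of the linear system has the form `x = a y + b z + (1 - a - b) x`, which says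
exactly `a (y - x) = b (x - z)`: the two transition probabilities balance the two differences.
For a centre mutant `a / b = r / m`, for a centre resident `b / a = 1 / (r m)`; cancelling the
common positive factors gives the two recurrences.
-/

theorem eq_mul_add_mul_add_one_sub_mul_iff {R : Type*} [CommRing R] (x y z a b : R) :
    x = a * y + b * z + (1 - a - b) * x ↔ a * (y - x) = b * (x - z) := by
  constructor <;> intro h <;> linear_combination -h

theorem star_centre_mutant_step {m i : ℕ} {r : ℝ} (hr : 0 < r) (hi : i < m) {x y z : ℝ}
    (h : (r / (r * (i + 1) + (m : ℝ) - i)) * (((m : ℝ) - i) / m) * (y - x)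
      = (((m : ℝ) - i) / (r * (i + 1) + (m : ℝ) - i)) * (x - z)) :
    y - x = ((m : ℝ) / r) * (x - z) := by
  have hmi : (0 : ℝ) < (m : ℝ) - i := sub_pos.2 (by exact_mod_cast hi)
  have hm : (0 : ℝ) < m := by exact_mod_cast (Nat.zero_lt_of_lt hi)
  have hD : (0 : ℝ) < r * (i + 1) + (m : ℝ) - i := by nlinarith
  field_simp at h ⊢
  exact h

theorem star_centre_resident_step {m i : ℕ} {r : ℝ} (hr : 0 < r) (hi0 : 0 < i) (him : i ≤ m)
    {x y z : ℝ}
    (h : (r * i / (r * i + (m : ℝ) + 1 - i)) * (y - x)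
      = ((1 / (r * i + (m : ℝ) + 1 - i)) * ((i : ℝ) / m)) * (x - z)) :
    y - x = (1 / (r * m)) * (x - z) := by
  have hi : (0 : ℝ) < i := by exact_mod_cast hi0
  have hm : (0 : ℝ) < m := by exact_mod_cast hi0.trans_le him
  have hD : (0 : ℝ) < r * i + (m : ℝ) + 1 - i := by
    have : (i : ℝ) ≤ m := by exact_mod_cast him
    nlinarith
  field_simp at h ⊢
  exact h

theorem star_two_term_recurrences_general
    (m : ℕ) (r : ℝ) (hr : 0 < r)
    (Φc Φn : ℕ → ℝ)
    (hrec1 : ∀ i, i < m →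
      Φc i = (r / (r * (i + 1) + (m : ℝ) - i)) * (((m : ℝ) - i) / m) * Φc (i + 1)
        + (((m : ℝ) - i) / (r * (i + 1) + (m : ℝ) - i)) * Φn i
        + (1 - (r / (r * (i + 1) + (m : ℝ) - i)) * (((m : ℝ) - i) / m)
             - (((m : ℝ) - i) / (r * (i + 1) + (m : ℝ) - i))) * Φc i)
    (hrec0 : ∀ i, 0 < i → i ≤ m →
      Φn i = (r * i / (r * i + (m : ℝ) + 1 - i)) * Φc i
        + ((1 / (r * i + (m : ℝ) + 1 - i)) * ((i : ℝ) / m)) * Φn (i - 1)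
        + (1 - (r * i / (r * i + (m : ℝ) + 1 - i))
             - ((1 / (r * i + (m : ℝ) + 1 - i)) * ((i : ℝ) / m))) * Φn i) :
    (∀ i, i < m → Φc (i + 1) - Φc i = ((m : ℝ) / r) * (Φc i - Φn i)) ∧
    (∀ i, 0 < i → i ≤ m →
      Φc i - Φn i = (1 / (r * m)) * (Φn i - Φn (i - 1))) := by
  refine ⟨fun i hi => ?_, fun i hi0 him => ?_⟩
  · exact star_centre_mutant_step hr hi
      ((eq_mul_add_mul_add_one_sub_mul_iff _ _ _ _ _).1 (hrec1 i hi))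
  · exact star_centre_resident_step hr hi0 him
      ((eq_mul_add_mul_add_one_sub_mul_iff _ _ _ _ _).1 (hrec0 i hi0 him))

/-- Two-term recurrences for the star graph Moran process: the fixation
probabilities satisfy `Φ_{i+1,1} − Φ_{i,1} = (m/r)(Φ_{i,1} − Φ_{i,0})` and
`Φ_{i,1} − Φ_{i,0} = (1/(rm))(Φ_{i,0} − Φ_{i−1,0})`. -/
theorem star_two_term_recurrences
    (m : ℕ) (hm : 1 ≤ m) (r : ℝ) (hr : 0 < r)
    (Φc Φn : ℕ → ℝ)
    (hΦn0 : Φn 0 = 0) (hΦcm : Φc m = 1)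
    (hrec1 : ∀ i, i < m →
      Φc i = (r / (r * (i + 1) + (m : ℝ) - i)) * (((m : ℝ) - i) / m) * Φc (i + 1)
        + (((m : ℝ) - i) / (r * (i + 1) + (m : ℝ) - i)) * Φn i
        + (1 - (r / (r * (i + 1) + (m : ℝ) - i)) * (((m : ℝ) - i) / m)
             - (((m : ℝ) - i) / (r * (i + 1) + (m : ℝ) - i))) * Φc i)
    (hrec0 : ∀ i, 0 < i → i ≤ m →
      Φn i = (r * i / (r * i + (m : ℝ) + 1 - i)) * Φc i
        + ((1 / (r * i + (m : ℝ) + 1 - i)) * ((i : ℝ) / m)) * Φn (i - 1)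
        + (1 - (r * i / (r * i + (m : ℝ) + 1 - i))
             - ((1 / (r * i + (m : ℝ) + 1 - i)) * ((i : ℝ) / m))) * Φn i) :
    (∀ i, i < m → Φc (i + 1) - Φc i = ((m : ℝ) / r) * (Φc i - Φn i)) ∧
    (∀ i, 0 < i → i ≤ m →
      Φc i - Φn i = (1 / (r * m)) * (Φn i - Φn (i - 1))) :=
  star_two_term_recurrences_general m r hr Φc Φn hrec1 hrec0
end

section
/- If a sequence (Φ_{i,1}, Φ_{i,0}) for 0 ≤ i ≤ m satisfies Φ_{i+1,1} − Φ_{i,1} = (m/r)(Φ_{i,1} − Φ_{i,0}) and Φ_{i,1} − Φ_{i,0} = (1/(rm))(Φ_{i,0} − Φ_{i−1,0}) with Φ_{0,0} = 0, then Φ_{i,0} = Σ_{j=1}^{i} (1/(rm))^{i−j} (rm/(rm+1))^{i−j+1} Φ_{j,1} for all 1 ≤ i ≤ m. -/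
/-!
Solving the second recurrence for `Φ_{i,0}` gives the first-order linear recurrence
`Φ_{i,0} = (rm/(rm+1)) Φ_{i,1} + (1/(rm+1)) Φ_{i-1,0}`, which unrolls from `Φ_{0,0} = 0`
into a convolution sum; the stated weights are those of the unrolled sum, since
`1/(rm+1) = (1/(rm)) (rm/(rm+1))`.
-/

open Finset

theorem eq_sum_Icc_of_forall_lt_eq_add {R : Type*} [CommSemiring R] (a b : R) (c x : ℕ → R)
    (n : ℕ) (hx₀ : x 0 = 0) (hx : ∀ k < n, x (k + 1) = a * c (k + 1) + b * x k) :
    x n = ∑ j ∈ Icc 1 n, b ^ (n - j) * a * c j := by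
  induction n with
  | zero => simp [hx₀]
  | succ n ih =>
    rw [hx n n.lt_succ_self, ih fun k hk => hx k (by omega),
      sum_Icc_succ_top (by omega), mul_sum, Nat.sub_self, pow_zero, one_mul, add_comm]
    congr 1
    refine sum_congr rfl fun j hj => ?_
    rw [Nat.succ_sub (mem_Icc.mp hj).2, pow_succ]
    ring

theorem eq_div_mul_add_of_sub_eq_one_div_mul {K : Type*} [Field K] {A c x y : K}
    (hA : A ≠ 0) (hA₁ : A + 1 ≠ 0) (h : c - x = 1 / A * (x - y)) :
    x = A / (A + 1) * c + 1 / (A + 1) * y := by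
  field_simp at h ⊢
  linear_combination -h

theorem one_div_pow_mul_div_add_one_pow_succ {K : Type*} [Field K] {A : K} (hA : A ≠ 0)
    (k : ℕ) : (1 / A) ^ k * (A / (A + 1)) ^ (k + 1) = (1 / (A + 1)) ^ k * (A / (A + 1)) := by
  rw [pow_succ, ← mul_assoc, ← mul_pow, one_div_mul_eq_div, div_div_cancel_left' hA, one_div]

theorem star_closed_form_general
    (m : ℕ) (r : ℝ) (hr : 0 < r)
    (Φc Φn : ℕ → ℝ) (hΦn0 : Φn 0 = 0)
    (hrec2 : ∀ i, 0 < i → i ≤ m →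
      Φc i - Φn i = (1 / (r * m)) * (Φn i - Φn (i - 1))) :
    ∀ i, 1 ≤ i → i ≤ m →
      Φn i = ∑ j ∈ Finset.Icc 1 i,
        (1 / (r * m)) ^ (i - j) * ((r * m) / (r * m + 1)) ^ (i - j + 1) * Φc j := by
  intro i hi him
  have hA : 0 < r * m := mul_pos hr (by exact_mod_cast hi.trans him)
  have hstep : ∀ k < i, Φn (k + 1) = r * m / (r * m + 1) * Φc (k + 1) + 1 / (r * m + 1) * Φn k :=
    fun k hk => eq_div_mul_add_of_sub_eq_one_div_mul hA.ne' (by positivity)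
      (hrec2 (k + 1) k.succ_pos (by omega))
  rw [eq_sum_Icc_of_forall_lt_eq_add _ _ Φc Φn i hΦn0 hstep]
  refine sum_congr rfl fun j _ => ?_
  rw [one_div_pow_mul_div_add_one_pow_succ hA.ne']

/-- Closed form for the centre-resident fixation probabilities of the star
graph: if `(Φ_{i,1}, Φ_{i,0})` satisfies the two-term recurrences with
`Φ_{0,0} = 0`, then
`Φ_{i,0} = ∑_{j=1}^{i} (1/(rm))^{i−j} (rm/(rm+1))^{i−j+1} Φ_{j,1}`. -/
theorem star_closed_form
    (m : ℕ) (hm : 1 ≤ m) (r : ℝ) (hr : 0 < r)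
    (Φc Φn : ℕ → ℝ) (hΦn0 : Φn 0 = 0)
    (hrec1 : ∀ i, i < m → Φc (i + 1) - Φc i = ((m : ℝ) / r) * (Φc i - Φn i))
    (hrec2 : ∀ i, 0 < i → i ≤ m →
      Φc i - Φn i = (1 / (r * m)) * (Φn i - Φn (i - 1))) :
    ∀ i, 1 ≤ i → i ≤ m →
      Φn i = ∑ j ∈ Finset.Icc 1 i,
        (1 / (r * m)) ^ (i - j) * ((r * m) / (r * m + 1)) ^ (i - j + 1) * Φc j :=
  star_closed_form_general m r hr Φc Φn hΦn0 hrec2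
end
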